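/- arXiv:2303.16623 — 3 statements merged into one kernel-verified Lean document; each statement's English description precedes it below -/
import Mathlib

section
/- Let E be a vector space, F a proper subspace, and A ⊆ E a linearly independent set with span(A) ∩ F = {0}. Then there exists a subspace V of E with span(A) ⊆ V, V ∩ F = {0}, and V linearly isomorphic to E/F. -/
theorem extend_indep_to_complement_general {K E : Type*} [Field K] [AddCommGroup E] [Module K E]
    (F : Submodule K E) (A : Set E)
    (hAF : Submodule.span K A ⊓ F = ⊥) :
    ∃ V : Submodule K E, Submodule.span K A ≤ V ∧ V ⊓ F = ⊥ ∧
      Nonempty (V ≃ₗ[K] E ⧸ F) := by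
  obtain ⟨V, hAV, hVF⟩ := (disjoint_iff.mpr hAF).exists_isCompl
  exact ⟨V, hAV, hVF.inf_eq_bot, ⟨(Submodule.quotientEquivOfIsCompl F V hVF.symm).symm⟩⟩

theorem extend_indep_to_complement {K E : Type*} [Field K] [AddCommGroup E] [Module K E]
    (F : Submodule K E) (hF : F ≠ ⊤) (A : Set E)
    (hA : LinearIndependent K ((↑) : A → E))
    (hAF : Submodule.span K A ⊓ F = ⊥) :
    ∃ V : Submodule K E, Submodule.span K A ≤ V ∧ V ⊓ F = ⊥ ∧
      Nonempty (V ≃ₗ[K] E ⧸ F) :=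
  extend_indep_to_complement_general F A hAF
end

section
/- Let X be a normed space, {x_γ : γ ∈ Γ} a linearly independent family in X, and 0 < p. Then the family of sequences f_γ = (n^{-1/p} · x_γ)_{n∈ℕ} is linearly independent in the space of X-valued sequences, and every nontrivial finite linear combination of the f_γ lies in ⋂_{q>p} ℓ_q(X) \ ℓ_p(X). -/
/-!
Every finite combination `∑ cᵢ fᵧᵢ` equals `n ↦ (n + 1) ^ (-1/p) • v` with `v = ∑ cᵢ xᵧᵢ`, and
`v ≠ 0` when `c ≠ 0` by independence of the `xᵧ`. Its `q`-th norm powers are then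
`‖v‖ ^ q · (n + 1) ^ (-q/p)`, a multiple of a `p`-series that converges iff `q/p > 1`.
-/

theorem summable_nat_add_one_rpow_iff {e : ℝ} :
    Summable (fun n : ℕ => ((n : ℝ) + 1) ^ e) ↔ e < -1 := by
  simpa using
    (summable_nat_add_iff (f := fun n : ℕ => (n : ℝ) ^ e) 1).trans Real.summable_nat_rpow

theorem summable_norm_nat_add_one_rpow_smul_rpow_iff {X : Type*} [NormedAddCommGroup X]
    [NormedSpace ℝ X] {v : X} (hv : v ≠ 0) (s q : ℝ) :
    Summable (fun n : ℕ => ‖((n : ℝ) + 1) ^ s • v‖ ^ q) ↔ s * q < -1 := by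
  have hterm : ∀ n : ℕ, ‖((n : ℝ) + 1) ^ s • v‖ ^ q = ((n : ℝ) + 1) ^ (s * q) * ‖v‖ ^ q := by
    intro n
    have hn : (0 : ℝ) ≤ (n : ℝ) + 1 := by positivity
    rw [norm_smul, Real.norm_of_nonneg (Real.rpow_nonneg hn s),
      Real.mul_rpow (Real.rpow_nonneg hn s) (norm_nonneg v), ← Real.rpow_mul hn]
  have hvq : ‖v‖ ^ q ≠ 0 := (Real.rpow_pos_of_pos (norm_pos_iff.mpr hv) q).ne'
  simp_rw [hterm, summable_mul_right_iff hvq, summable_nat_add_one_rpow_iff]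

theorem LinearIndependent.weight_smul {ι α X : Type*} [AddCommGroup X] [Module ℝ X]
    {x : ι → X} (hx : LinearIndependent ℝ x) {w : α → ℝ} {a : α} (ha : w a ≠ 0) :
    LinearIndependent ℝ (fun i => fun n => w n • x i) := by
  let L : X →ₗ[ℝ] (α → X) := LinearMap.pi fun n => w n • LinearMap.id
  have hL : Function.Injective L := fun u v huv => smul_right_injective X ha (congrFun huv a)
  exact hx.map' L (LinearMap.ker_eq_bot.mpr hL)

theorem indep_family_in_intersection {X Γ : Type*} [NormedAddCommGroup X]
    [NormedSpace ℝ X] (x : Γ → X) (hx : LinearIndependent ℝ x)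
    (p : ℝ) (hp : 0 < p) :
    LinearIndependent ℝ (fun γ : Γ => fun n : ℕ => ((n + 1 : ℝ)) ^ (-(1 / p)) • x γ) ∧
    ∀ c : Γ →₀ ℝ, c ≠ 0 →
      (∀ q : ℝ, p < q →
        Summable (fun n : ℕ =>
          ‖c.sum fun γ a => a • (((n + 1 : ℝ)) ^ (-(1 / p)) • x γ)‖ ^ q)) ∧
      ¬ Summable (fun n : ℕ =>
          ‖c.sum fun γ a => a • (((n + 1 : ℝ)) ^ (-(1 / p)) • x γ)‖ ^ p) := by
  refine ⟨hx.weight_smul (a := 0) (by simp), fun c hc => ?_⟩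
  set v : X := c.sum fun γ a => a • x γ
  have hv : v ≠ 0 := fun h => hc (linearIndependent_iff.mp hx c h)
  have hcomb : ∀ n : ℕ, (c.sum fun γ a => a • (((n + 1 : ℝ)) ^ (-(1 / p)) • x γ)) =
      ((n + 1 : ℝ)) ^ (-(1 / p)) • v := fun n => by
    rw [Finsupp.smul_sum]
    exact Finsupp.sum_congr fun γ _ => smul_comm _ _ _
  simp_rw [hcomb, summable_norm_nat_add_one_rpow_smul_rpow_iff hv]
  refine ⟨fun q hq => ?_, by field_simp; norm_num⟩
  rw [neg_mul, one_div_mul_eq_div, neg_lt_neg_iff, one_lt_div hp]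
  exact hq
end

section
/- For 0 < p, the space L^p[0,1] \ ⋃_{q>p} L^q[0,1] contains, together with 0, a linear subspace of dimension continuum; in particular, there exists a function in L^p[0,1] not belonging to L^q[0,1] for any q > p. -/
/-!
Split `(0, 1]` into the dyadic blocks `(2⁻⁽ⁿ⁺¹⁾, 2⁻ⁿ]` and put the height
`hₙ = (2ⁿ⁺¹ / (n + 1)²)^(1/p)` on the `n`-th block. The `p`-th power of this step function has
integral `∑ 1 / (n + 1)²`, while for `q > p` the block contributions `hₙ^q 2⁻⁽ⁿ⁺¹⁾` grow
exponentially. Keeping only the blocks indexed by `B r`, for an almost disjoint family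
`(B r)_{r ∈ ℝ}` of infinite subsets of `ℕ`, gives continuum many functions, and any nonzero linear
combination of them is a nonzero multiple of `hₙ` on infinitely many blocks. Hence the family is
linearly independent, and each nonzero combination lies in `Lᵖ` but in no `L^q`.
-/

open MeasureTheory Set Filter
open scoped ENNReal

theorem ENNReal.tsum_ofReal_ne_top_iff {α : Type*} {f : α → ℝ} (hf : ∀ i, 0 ≤ f i) :
    ∑' i, ENNReal.ofReal (f i) ≠ ∞ ↔ Summable f := by
  simp_rw [ENNReal.ofReal, ENNReal.tsum_coe_ne_top_iff_summable_coe, Real.coe_toNNReal _ (hf _)]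

theorem MeasureTheory.memLp_of_mem_span {α E 𝕜 : Type*} [MeasurableSpace α] {μ : Measure α}
    {p : ℝ≥0∞} [NormedRing 𝕜] [NormedAddCommGroup E] [Module 𝕜 E] [IsBoundedSMul 𝕜 E]
    {s : Set (α → E)} (hs : ∀ f ∈ s, MemLp f p μ) {f : α → E} (hf : f ∈ Submodule.span 𝕜 s) :
    MemLp f p μ :=
  Submodule.span_induction hs MemLp.zero (fun _ _ _ _ => MemLp.add)
    (fun c _ _ h => h.const_smul c) hf

def IsAlmostDisjointFamily {ι : Type*} (B : ι → Set ℕ) : Prop :=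
  (∀ i, (B i).Infinite) ∧ Pairwise fun i j => (B i ∩ B j).Finite

namespace IsAlmostDisjointFamily

variable {ι : Type*} {B : ι → Set ℕ}

theorem infinite_diff_biUnion (hB : IsAlmostDisjointFamily B) {j : ι} {s : Finset ι}
    (hj : j ∉ s) : (B j \ ⋃ i ∈ s, B i).Infinite := by
  have hfin : (B j ∩ ⋃ i ∈ s, B i).Finite := by
    rw [inter_iUnion₂]
    exact s.finite_toSet.biUnion fun i hi => hB.2 fun hji => hj (hji ▸ hi)
  simpa only [sdiff_self_inter] using (hB.1 j).sdiff hfin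

/-- The infinite set is that of the indices lying in `B j` and in no other `B i` with
`l i ≠ 0`. -/
theorem exists_infinite_setOf_linearCombination_indicator_eq (hB : IsAlmostDisjointFamily B)
    (c : ℕ → ℝ) {l : ι →₀ ℝ} (hl : l ≠ 0) :
    ∃ j, l j ≠ 0 ∧
      {n | Finsupp.linearCombination ℝ (fun i => (B i).indicator c) l n = l j * c n}.Infinite := by
  classical
  obtain ⟨j, hj⟩ := Finsupp.ne_iff.mp hl
  refine ⟨j, hj, (hB.infinite_diff_biUnion (Finset.notMem_erase j l.support)).mono ?_⟩
  rintro n ⟨hnj, hn⟩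
  simp only [mem_iUnion, Finset.mem_erase, not_exists] at hn
  rw [mem_ofPred_eq, Finsupp.linearCombination_apply, Finsupp.sum, Finset.sum_apply,
    Finset.sum_eq_single_of_mem j (Finsupp.mem_support_iff.mpr hj)
      fun i hi hij => by simp [indicator_of_notMem (hn i ⟨hij, hi⟩)]]
  simp [indicator_of_mem hnj]

theorem linearIndependent_indicator (hB : IsAlmostDisjointFamily B) {c : ℕ → ℝ}
    (hc : ∀ n, c n ≠ 0) : LinearIndependent ℝ fun i => (B i).indicator c := by
  refine linearIndependent_iff.mpr fun l hl0 => by_contra fun hl => ?_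
  obtain ⟨j, hj, hinf⟩ := hB.exists_infinite_setOf_linearCombination_indicator_eq c hl
  obtain ⟨n, hn⟩ := hinf.nonempty
  rw [mem_ofPred_eq, hl0] at hn
  exact mul_ne_zero hj (hc n) hn.symm

end IsAlmostDisjointFamily

/-- The codes of the pairs `(k, ⌊2ᵏ r⌋)`: two distinct reals share only the dyadic approximations
at the finitely many scales `2⁻ᵏ` exceeding their distance. -/
def dyadicCodes (r : ℝ) : Set ℕ :=
  range fun k : ℕ => Nat.pair k (Encodable.encode ⌊r * 2 ^ k⌋)

theorem finite_setOf_floor_mul_two_pow_eq {r r' : ℝ} (h : r ≠ r') :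
    {k : ℕ | ⌊r * 2 ^ k⌋ = ⌊r' * 2 ^ k⌋}.Finite := by
  have hd : 0 < |r - r'| := abs_pos.mpr (sub_ne_zero.mpr h)
  have hlarge : ∀ᶠ k : ℕ in cofinite, 1 ≤ |r - r'| * 2 ^ k := by
    rw [Nat.cofinite_eq_atTop]
    exact ((tendsto_pow_atTop_atTop_of_one_lt one_lt_two).const_mul_atTop hd).eventually_ge_atTop 1
  refine (eventually_cofinite.mp hlarge).subset fun k hk => ?_
  have hclose := Int.abs_sub_lt_one_of_floor_eq_floor hk
  rw [← sub_mul, abs_mul, abs_of_pos (by positivity : (0 : ℝ) < 2 ^ k)] at hclose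
  exact hclose.not_ge

theorem isAlmostDisjointFamily_dyadicCodes : IsAlmostDisjointFamily dyadicCodes := by
  refine ⟨fun r => infinite_range_of_injective fun k k' h => (Nat.pair_eq_pair.mp h).1,
    fun r r' h => ?_⟩
  refine ((finite_setOf_floor_mul_two_pow_eq h).image
    fun k => Nat.pair k (Encodable.encode ⌊r * 2 ^ k⌋)).subset ?_
  rintro _ ⟨⟨k, rfl⟩, ⟨k', hk'⟩⟩
  obtain ⟨rfl, he⟩ := Nat.pair_eq_pair.mp hk'
  exact ⟨k', (Encodable.encode_injective he).symm, rfl⟩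

/-- On `(0, 1]`, `dyadicIndex x = n` exactly when `x ∈ dyadicBlock n`; elsewhere it is junk. -/
noncomputable def dyadicIndex (x : ℝ) : ℕ := ⌊Real.logb 2 x⁻¹⌋₊

def dyadicBlock (n : ℕ) : Set ℝ := Ioc (2 ^ (n + 1))⁻¹ (2 ^ n)⁻¹

theorem dyadicIndex_eq_iff {x : ℝ} (hx : x ∈ Ioc 0 1) {n : ℕ} :
    dyadicIndex x = n ↔ x ∈ dyadicBlock n := by
  have hx' : 0 < x⁻¹ := inv_pos.mpr hx.1
  rw [dyadicIndex, Nat.floor_eq_iff (Real.logb_nonneg one_lt_two ((one_le_inv₀ hx.1).mpr hx.2)),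
    Real.le_logb_iff_rpow_le one_lt_two hx', Real.logb_lt_iff_lt_rpow one_lt_two hx',
    ← Nat.cast_succ, Real.rpow_natCast, Real.rpow_natCast, dyadicBlock, mem_Ioc,
    inv_lt_comm₀ (by positivity) hx.1, le_inv_comm₀ hx.1 (by positivity), and_comm]

theorem dyadicBlock_subset_Ioc (n : ℕ) : dyadicBlock n ⊆ Ioc 0 1 :=
  Ioc_subset_Ioc (by positivity) (inv_le_one_of_one_le₀ (one_le_pow₀ one_le_two))

theorem measurableSet_dyadicBlock (n : ℕ) : MeasurableSet (dyadicBlock n) := measurableSet_Ioc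

theorem iUnion_dyadicBlock : ⋃ n, dyadicBlock n = Ioc 0 1 :=
  (iUnion_subset dyadicBlock_subset_Ioc).antisymm fun _ hx =>
    mem_iUnion.mpr ⟨_, (dyadicIndex_eq_iff hx).mp rfl⟩

theorem pairwise_disjoint_dyadicBlock : Pairwise (Function.onFun Disjoint dyadicBlock) :=
  fun m n hmn => disjoint_left.mpr fun _ hm hn => hmn <|
    ((dyadicIndex_eq_iff (dyadicBlock_subset_Ioc m hm)).mpr hm).symm.trans
      ((dyadicIndex_eq_iff (dyadicBlock_subset_Ioc n hn)).mpr hn)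

theorem dyadicIndex_surjective : Function.Surjective dyadicIndex := fun n => by
  have hn : (2 ^ n : ℝ)⁻¹ ∈ dyadicBlock n :=
    ⟨inv_strictAnti₀ (by positivity) (pow_lt_pow_right₀ one_lt_two n.lt_succ_self), le_rfl⟩
  exact ⟨_, (dyadicIndex_eq_iff (dyadicBlock_subset_Ioc n hn)).mpr hn⟩

theorem measurable_dyadicIndex : Measurable dyadicIndex :=
  Nat.measurable_floor.comp (by unfold Real.logb; fun_prop)

theorem volume_dyadicBlock (n : ℕ) : volume (dyadicBlock n) = (2 ^ (n + 1))⁻¹ := by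
  have hlength : (2 ^ n : ℝ)⁻¹ - (2 ^ (n + 1))⁻¹ = (2 ^ (n + 1))⁻¹ := by rw [pow_succ]; ring
  rw [dyadicBlock, Real.volume_Ioc, hlength, ENNReal.ofReal_inv_of_pos (by positivity),
    ENNReal.ofReal_pow zero_le_two, ENNReal.ofReal_ofNat]

theorem setLIntegral_Icc_comp_dyadicIndex (g : ℕ → ℝ≥0∞) :
    ∫⁻ x in Icc 0 1, g (dyadicIndex x) = ∑' n, g n / 2 ^ (n + 1) := by
  rw [← setLIntegral_congr Ioc_ae_eq_Icc, ← iUnion_dyadicBlock,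
    lintegral_iUnion measurableSet_dyadicBlock pairwise_disjoint_dyadicBlock]
  refine tsum_congr fun n => ?_
  rw [setLIntegral_congr_fun (measurableSet_dyadicBlock n) fun x hx =>
      congrArg g ((dyadicIndex_eq_iff (dyadicBlock_subset_Ioc n hx)).mpr hx),
    setLIntegral_const, volume_dyadicBlock, div_eq_mul_inv]

/-- The step function equal to `a n` on the `n`-th dyadic block `(2⁻⁽ⁿ⁺¹⁾, 2⁻ⁿ]`. -/
noncomputable def dyadicStep : (ℕ → ℝ) →ₗ[ℝ] ℝ → ℝ := LinearMap.funLeft ℝ ℝ dyadicIndex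

theorem dyadicStep_apply (a : ℕ → ℝ) (x : ℝ) : dyadicStep a x = a (dyadicIndex x) := rfl

theorem measurable_dyadicStep (a : ℕ → ℝ) : Measurable (dyadicStep a) :=
  measurable_from_nat.comp measurable_dyadicIndex

theorem dyadicStep_injective : Function.Injective dyadicStep :=
  LinearMap.funLeft_injective_of_surjective _ _ _ dyadicIndex_surjective

theorem memLp_dyadicStep_iff {q : ℝ} (hq : 0 < q) (a : ℕ → ℝ) :
    MemLp (dyadicStep a) (ENNReal.ofReal q) (volume.restrict (Icc 0 1)) ↔
      Summable fun n => |a n| ^ q / 2 ^ (n + 1) := by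
  have hterm : ∀ n, ‖a n‖ₑ ^ q / 2 ^ (n + 1) = ENNReal.ofReal (|a n| ^ q / 2 ^ (n + 1)) := by
    intro n
    rw [Real.enorm_eq_ofReal_abs, ENNReal.ofReal_div_of_pos (by positivity),
      ENNReal.ofReal_rpow_of_nonneg (abs_nonneg _) hq.le, ENNReal.ofReal_pow zero_le_two,
      ENNReal.ofReal_ofNat]
  rw [MemLp, and_iff_right (measurable_dyadicStep a).aestronglyMeasurable,
    eLpNorm_lt_top_iff_lintegral_rpow_enorm_lt_top (by simpa using hq) ENNReal.ofReal_ne_top,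
    ENNReal.toReal_ofReal hq.le, lt_top_iff_ne_top]
  simp only [dyadicStep_apply]
  rw [setLIntegral_Icc_comp_dyadicIndex fun n => ‖a n‖ₑ ^ q, tsum_congr hterm,
    ENNReal.tsum_ofReal_ne_top_iff fun n => by positivity]

/-- Heights chosen so that `hₙᵖ · |block n| = 1 / (n + 1)²`. -/
noncomputable def dyadicHeight (p : ℝ) (n : ℕ) : ℝ := (2 ^ (n + 1) / ((n : ℝ) + 1) ^ 2) ^ p⁻¹

theorem dyadicHeight_pos (p : ℝ) (n : ℕ) : 0 < dyadicHeight p n := by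
  unfold dyadicHeight; positivity

theorem dyadicHeight_rpow (p q : ℝ) (n : ℕ) :
    dyadicHeight p n ^ q = (2 ^ (n + 1) / ((n : ℝ) + 1) ^ 2) ^ (q / p) := by
  rw [dyadicHeight, ← Real.rpow_mul (by positivity), inv_mul_eq_div]

theorem summable_dyadicHeight_rpow_div {p : ℝ} (hp : 0 < p) :
    Summable fun n => dyadicHeight p n ^ p / 2 ^ (n + 1) := by
  have hsq : Summable fun n : ℕ => 1 / ((n : ℝ) + 1) ^ 2 := by
    simpa using (summable_nat_add_iff 1).mpr (Real.summable_one_div_nat_pow.mpr one_lt_two)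
  refine hsq.congr fun n => ?_
  rw [dyadicHeight_rpow, div_self hp.ne', Real.rpow_one]
  field_simp

/-- The terms are `e^{b m} / m^{2q/p}` with `m = n + 1` and `b = (q/p - 1) log 2 > 0`. -/
theorem tendsto_dyadicHeight_rpow_div {p q : ℝ} (hp : 0 < p) (hpq : p < q) :
    Tendsto (fun n => dyadicHeight p n ^ q / 2 ^ (n + 1)) atTop atTop := by
  have hb : 0 < (q / p - 1) * Real.log 2 :=
    mul_pos (by linarith [(one_lt_div hp).mpr hpq]) (Real.log_pos one_lt_two)
  have hm : Tendsto (fun n : ℕ => (n : ℝ) + 1) atTop atTop :=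
    tendsto_atTop_add_const_right _ 1 tendsto_natCast_atTop_atTop
  refine ((tendsto_exp_mul_div_rpow_atTop (2 * (q / p)) _ hb).comp hm).congr fun n => ?_
  have h2 : (2 : ℝ) ^ (n + 1) = Real.exp (((n : ℝ) + 1) * Real.log 2) := by
    rw [← Real.exp_log (by positivity : (0 : ℝ) < 2 ^ (n + 1)), Real.log_pow]
    push_cast
    rfl
  rw [Function.comp_apply, dyadicHeight_rpow, Real.div_rpow (by positivity) (by positivity),
    ← Real.rpow_natCast _ 2, ← Real.rpow_mul (by positivity), h2, ← Real.exp_mul,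
    div_right_comm, ← Real.exp_sub]
  push_cast
  ring_nf

theorem memLp_dyadicStep_of_abs_le {p : ℝ} (hp : 0 < p) {a : ℕ → ℝ}
    (ha : ∀ n, |a n| ≤ dyadicHeight p n) :
    MemLp (dyadicStep a) (ENNReal.ofReal p) (volume.restrict (Icc 0 1)) :=
  (memLp_dyadicStep_iff hp a).mpr <| (summable_dyadicHeight_rpow_div hp).of_nonneg_of_le
    (fun _ => by positivity) fun n => by gcongr; exact ha n

theorem not_memLp_dyadicStep {p q : ℝ} (hp : 0 < p) (hpq : p < q) {a : ℕ → ℝ} {t : ℝ}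
    (ht : t ≠ 0) (h : {n | a n = t * dyadicHeight p n}.Infinite) :
    ¬ MemLp (dyadicStep a) (ENNReal.ofReal q) (volume.restrict (Icc 0 1)) := by
  rw [memLp_dyadicStep_iff (hp.trans hpq)]
  intro hsum
  have htq : 0 < |t| ^ q := by positivity
  have hsmall : ∀ᶠ n in atTop, |a n| ^ q / 2 ^ (n + 1) < |t| ^ q :=
    hsum.tendsto_atTop_zero.eventually (gt_mem_nhds htq)
  have hlarge : ∀ᶠ n in atTop, 1 ≤ dyadicHeight p n ^ q / 2 ^ (n + 1) :=
    (tendsto_dyadicHeight_rpow_div hp hpq).eventually_ge_atTop 1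
  obtain ⟨n, hn, hsmall, hlarge⟩ :=
    (Nat.frequently_atTop_iff_infinite.mpr h).and_eventually (hsmall.and hlarge) |>.exists
  rw [hn, abs_mul, abs_of_pos (dyadicHeight_pos p n), Real.mul_rpow (abs_nonneg t)
    (dyadicHeight_pos p n).le, mul_div_assoc] at hsmall
  exact (le_mul_of_one_le_right htq.le hlarge).not_gt hsmall

theorem memLp_and_not_memLp_of_mem_span {ι : Type*} {B : ι → Set ℕ}
    (hB : IsAlmostDisjointFamily B) {p : ℝ} (hp : 0 < p) :
    ∀ f ∈ Submodule.span ℝ (range fun i => dyadicStep ((B i).indicator (dyadicHeight p))),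
      f ≠ 0 → MemLp f (ENNReal.ofReal p) (volume.restrict (Icc 0 1)) ∧
        ∀ q, p < q → ¬ MemLp f (ENNReal.ofReal q) (volume.restrict (Icc 0 1)) := by
  intro f hf hf0
  refine ⟨memLp_of_mem_span ?_ hf, fun q hpq => ?_⟩
  · rintro _ ⟨i, rfl⟩
    refine memLp_dyadicStep_of_abs_le hp fun n => ?_
    have hpos := dyadicHeight_pos p n
    by_cases hn : n ∈ B i <;> simp [hn, abs_of_pos hpos, hpos.le]
  · obtain ⟨l, rfl⟩ := Finsupp.mem_span_range_iff_exists_finsupp.mp hf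
    have hl : l ≠ 0 := by rintro rfl; simp at hf0
    obtain ⟨j, hj, hinf⟩ :=
      hB.exists_infinite_setOf_linearCombination_indicator_eq (dyadicHeight p) hl
    have hnot := not_memLp_dyadicStep hp hpq hj hinf
    rwa [Finsupp.apply_linearCombination, Finsupp.linearCombination_apply] at hnot

theorem lp_minus_lq_lineable (p : ℝ) (hp : 0 < p) :
    (∃ V : Submodule ℝ (ℝ → ℝ), Module.rank ℝ V = Cardinal.continuum ∧
      ∀ f ∈ V, f ≠ 0 →
        MemLp f (ENNReal.ofReal p) (volume.restrict (Set.Icc 0 1)) ∧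
        ∀ q : ℝ, p < q →
          ¬ MemLp f (ENNReal.ofReal q) (volume.restrict (Set.Icc 0 1))) ∧
    ∃ f : ℝ → ℝ,
      MemLp f (ENNReal.ofReal p) (volume.restrict (Set.Icc 0 1)) ∧
      ∀ q : ℝ, p < q →
        ¬ MemLp f (ENNReal.ofReal q) (volume.restrict (Set.Icc 0 1)) := by
  have hF : LinearIndependent ℝ fun r => dyadicStep ((dyadicCodes r).indicator (dyadicHeight p)) :=
    (isAlmostDisjointFamily_dyadicCodes.linearIndependent_indicator
      fun n => (dyadicHeight_pos p n).ne').map' dyadicStep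
      (LinearMap.ker_eq_bot.mpr dyadicStep_injective)
  have hV := memLp_and_not_memLp_of_mem_span isAlmostDisjointFamily_dyadicCodes hp
  exact ⟨⟨_, by rw [rank_span hF, Cardinal.mk_range_eq _ hF.injective, Cardinal.mk_real], hV⟩,
    _, hV _ (Submodule.subset_span (mem_range_self 0)) (hF.ne_zero 0)⟩
end
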